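/- Let x, y be points on the unit sphere S² ⊂ ℝ³ and let a ∈ [0, π/2]. The spherical caps C(x,a) and C(y,a) of angular radius a centered at x and y have nonempty intersection if and only if the angular distance between the centers satisfies θ(x,y) ≤ 2a. -/

import Mathlib

open MeasureTheory Real Set
open scoped RealInnerProductSpace

/-- The unit sphere `S²` in `ℝ³`. -/
noncomputable def S2 : Set (EuclideanSpace ℝ (Fin 3)) :=
  Metric.sphere (0 : EuclideanSpace ℝ (Fin 3)) 1

/-- The angular distance `θ(x,y) = arccos ⟪x,y⟫` between two points of the sphere. -/
noncomputable def angDist (x y : EuclideanSpace ℝ (Fin 3)) : ℝ :=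
  Real.arccos ⟪x, y⟫

/-- The spherical cap of angular radius `a` centered at `y ∈ S²`. -/
noncomputable def cap (y : EuclideanSpace ℝ (Fin 3)) (a : ℝ) : Set (EuclideanSpace ℝ (Fin 3)) :=
  {x | x ∈ S2 ∧ angDist x y ≤ a}

/-!
The triangle inequality for angles gives `θ(x,y) ≤ 2a` for any common point of the two caps.
Conversely the normalized midpoint `(x + y)/‖x + y‖` bisects the angle between `x` and `y`, so it
lies in both caps; when `y = -x` there is no midpoint, but then `2a ≥ π` and any unit vector
orthogonal to `x` is at angle `π/2 ≤ a` from both centers, which needs a second dimension.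
-/

open InnerProductGeometry Module

section

variable {V : Type*} [NormedAddCommGroup V] [InnerProductSpace ℝ V]

lemma angle_eq_arccos_inner_of_norm_eq_one {x y : V} (hx : ‖x‖ = 1) (hy : ‖y‖ = 1) :
    angle x y = arccos ⟪x, y⟫ := by
  simp [angle, hx, hy]

lemma angle_add_eq_half_angle_of_norm_eq {x y : V} (hxy : ‖x‖ = ‖y‖) (hy : y ≠ 0) :
    angle x (x + y) = angle x y / 2 := by
  have hsymm : angle x (x + y) = angle y (x + y) := by
    simp only [angle, inner_add_right, real_inner_self_eq_norm_sq, hxy, real_inner_comm x y,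
      add_comm]
  linarith [angle_eq_angle_add_add_angle_add x hy]

lemma exists_norm_eq_one_inner_eq_zero (hV : 1 < finrank ℝ V) (x : V) :
    ∃ z : V, ‖z‖ = 1 ∧ ⟪x, z⟫ = 0 := by
  have : FiniteDimensional ℝ V := Module.finite_of_finrank_pos (by omega)
  have hspan : (ℝ ∙ x) ≠ ⊤ := fun h => by
    have := finrank_span_le_card (R := ℝ) ({x} : Set V)
    rw [h, finrank_top, Set.toFinset_singleton, Finset.card_singleton] at this
    omega
  obtain ⟨w, hw, hw0⟩ :=
    Submodule.exists_mem_ne_zero_of_ne_bot (mt Submodule.orthogonal_eq_bot_iff.mp hspan)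
  refine ⟨NormedSpace.normalize w, NormedSpace.norm_normalize_eq_one_iff.mpr hw0, ?_⟩
  rw [NormedSpace.normalize, real_inner_smul_right,
    Submodule.mem_orthogonal_singleton_iff_inner_right.mp hw, mul_zero]

theorem exists_norm_eq_one_angle_le_and_angle_le_iff (hV : 1 < finrank ℝ V) {x y : V}
    (hx : ‖x‖ = 1) (hy : ‖y‖ = 1) (a : ℝ) :
    (∃ z : V, ‖z‖ = 1 ∧ angle x z ≤ a ∧ angle y z ≤ a) ↔ angle x y ≤ 2 * a := by
  constructor
  · rintro ⟨z, -, hxz, hyz⟩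
    linarith [angle_le_angle_add_angle x z y, angle_comm z y]
  intro hxy
  have hx0 : x ≠ 0 := norm_ne_zero_iff.mp (by simp [hx])
  have hy0 : y ≠ 0 := norm_ne_zero_iff.mp (by simp [hy])
  by_cases hsum : x + y = 0
  · have hyx : y = -x := eq_neg_of_add_eq_zero_right hsum
    have hpi : angle x y = π := hyx ▸ angle_self_neg_of_nonzero hx0
    obtain ⟨z, hz, hxz⟩ := exists_norm_eq_one_inner_eq_zero hV x
    have hxz' : angle x z = π / 2 := (inner_eq_zero_iff_angle_eq_pi_div_two x z).mp hxz
    refine ⟨z, hz, by linarith, ?_⟩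
    rw [hyx, angle_neg_left]
    linarith
  · refine ⟨NormedSpace.normalize (x + y),
      NormedSpace.norm_normalize_eq_one_iff.mpr hsum, ?_, ?_⟩
    · rw [angle_normalize_right, angle_add_eq_half_angle_of_norm_eq (hx.trans hy.symm) hy0]
      linarith
    · rw [angle_normalize_right, add_comm,
        angle_add_eq_half_angle_of_norm_eq (hy.trans hx.symm) hx0, angle_comm]
      linarith

end

lemma mem_S2_iff {x : EuclideanSpace ℝ (Fin 3)} : x ∈ S2 ↔ ‖x‖ = 1 := by
  simp [S2]

lemma mem_cap_iff {x z : EuclideanSpace ℝ (Fin 3)} (hx : ‖x‖ = 1) (a : ℝ) :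
    z ∈ cap x a ↔ ‖z‖ = 1 ∧ angle x z ≤ a := by
  rw [cap, Set.mem_ofPred_eq, mem_S2_iff, and_congr_right_iff]
  intro hz
  rw [angDist, ← angle_eq_arccos_inner_of_norm_eq_one hz hx, angle_comm]

theorem caps_intersect_iff_general (x y : EuclideanSpace ℝ (Fin 3)) (hx : x ∈ S2) (hy : y ∈ S2)
    (a : ℝ) :
    (cap x a ∩ cap y a).Nonempty ↔ angDist x y ≤ 2 * a := by
  rw [mem_S2_iff] at hx hy
  rw [angDist, ← angle_eq_arccos_inner_of_norm_eq_one hx hy,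
    ← exists_norm_eq_one_angle_le_and_angle_le_iff (by simp) hx hy]
  simp only [Set.Nonempty, Set.mem_inter_iff, mem_cap_iff hx, mem_cap_iff hy]
  exact exists_congr fun z => by tauto

/-- Two spherical caps of angular radius `a ∈ [0, π/2]` centered at `x, y ∈ S²` intersect
if and only if the angular distance between the centers is at most `2a`. -/
theorem caps_intersect_iff (x y : EuclideanSpace ℝ (Fin 3)) (hx : x ∈ S2) (hy : y ∈ S2)
    (a : ℝ) (ha : a ∈ Set.Icc 0 (π / 2)) :
    (cap x a ∩ cap y a).Nonempty ↔ angDist x y ≤ 2 * a :=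
  caps_intersect_iff_general x y hx hy a
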